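/- arXiv:1711.01057 — 2 statements merged into one kernel-verified Lean document; each statement's English description precedes it below -/
import Mathlib

section
/- Let (W,S) be a right-angled Coxeter system with S finite. Then for every n ∈ ℕ the set {w ∈ W : F#(w) ≤ n} is finite; more precisely, it is contained in the ball {w ∈ W : ℓ(w) ≤ d(n)} for some d(n) ∈ ℕ depending only on n and (W,S). -/
/-- A Coxeter matrix is *right-angled* if all of its off-diagonal entries are equal to `2`
or to `0` (where `0` encodes `∞`, i.e. no relation). -/
def CoxeterMatrix.IsRightAngled {B : Type*} (M : CoxeterMatrix B) : Prop :=
  ∀ i j : B, i ≠ j → M i j = 2 ∨ M i j = 0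

/-- An element `w` of a Coxeter group is *firm* if there is a unique simple generator `r`
with `ℓ(w r) < ℓ(w)`.  (This forces `ℓ(w) ≥ 1`.) -/
def CoxeterSystem.IsFirm {B W : Type*} [Group W] {M : CoxeterMatrix B}
    (cs : CoxeterSystem M W) (w : W) : Prop :=
  ∃! r : B, cs.length (w * cs.simple r) < cs.length w

/-- The *firmness* `F#(w)` of an element `w` of a Coxeter group: the largest `k` such that
`w` admits a reduced representation whose prefix of length `k` represents a firm element
(of length `k`, automatically).  By convention `F#(1) = 0` (the case `k = 0`). -/
noncomputable def CoxeterSystem.firmness {B W : Type*} [Group W] {M : CoxeterMatrix B}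
    (cs : CoxeterSystem M W) (w : W) : ℕ :=
  sSup {k | ∃ ω : List B, cs.IsReduced ω ∧ cs.wordProd ω = w ∧ k ≤ ω.length ∧
    (k = 0 ∨ cs.IsFirm (cs.wordProd (ω.take k)))}

/-!
Right-angled Coxeter groups act on `ℤ^S` by the geometric representation, and positivity of roots
(`w αₛ ≥ 0` unless `s` is a right descent of `w`) forces any two right descents of `w` to commute.
Hence every right descent of `π ω`, for `ω` reduced, is the letter of a position of `ω` commuting
with all later letters, and deleting such a position passes to a prefix of `π ω` in the weak order,
which does not increase firmness. Deleting all such positions off a given chain of the heap of `ω`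
(positions ordered by non-commuting letters) ends at a word with a unique right descent, i.e. a firm
element, so heap chains are at most `F#(w)` long. Equal letters never commute, so each letter occurs
at most once at each height of the heap, and `ℓ(w) ≤ |S| · F#(w)`.
-/

namespace List

variable {α : Type*} {d : α}

theorem getD_mem_drop {l : List α} {a b : ℕ} (hab : a < b) (hb : b < l.length) :
    l.getD b d ∈ l.drop (a + 1) := by
  rw [List.getD_eq_getElem _ _ hb]
  have : b - (a + 1) < (l.drop (a + 1)).length := by simp; omega
  convert List.getElem_mem this using 1
  rw [List.getElem_drop]
  congr 1
  omega

theorem getD_eraseIdx_of_ne (l : List α) {j a : ℕ} (haj : a ≠ j) :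
    (l.eraseIdx j).getD (if a < j then a else a - 1) d = l.getD a d := by
  simp only [List.getD_eq_getElem?_getD]
  rcases lt_or_gt_of_ne haj with h | h
  · rw [if_pos h, List.getElem?_eraseIdx_of_lt h]
  · rw [if_neg (by omega), List.getElem?_eraseIdx_of_ge (by omega), Nat.sub_add_cancel (by omega)]

end List

namespace CoxeterMatrix

open Matrix

variable {B : Type*}

section Heap

-- `d` is a default letter for `List.getD`, only ever read at positions outside the word.
variable (M : CoxeterMatrix B) (d : B)

def IsTailCommuting (ω : List B) (j : ℕ) : Prop :=
  j < ω.length ∧ ∀ c ∈ ω.drop (j + 1), M (ω.getD j d) c = 2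

def IsHeapChain (ω : List B) (p : List ℕ) : Prop :=
  (∀ a ∈ p, a < ω.length) ∧ p.IsChain fun a b => a < b ∧ M (ω.getD a d) (ω.getD b d) ≠ 2

variable {M d}

theorem IsHeapChain.length_le {ω : List B} {p : List ℕ} (hp : M.IsHeapChain d ω p) :
    p.length ≤ ω.length := by
  have hsorted : p.Pairwise (· < ·) := List.isChain_iff_pairwise.mp (hp.2.imp fun _ _ h => h.1)
  simpa using (hsorted.nodup.subperm fun a ha => List.mem_range.mpr (hp.1 a ha)).length_le

theorem isHeapChain_singleton {ω : List B} {j : ℕ} (hj : j < ω.length) :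
    M.IsHeapChain d ω [j] :=
  ⟨by simpa using hj, List.isChain_singleton j⟩

theorem IsHeapChain.concat {ω : List B} {p : List ℕ} (hp : M.IsHeapChain d ω p) {i j : ℕ}
    (hi : p.getLast? = some i) (hij : i < j) (hj : j < ω.length)
    (hM : M (ω.getD i d) (ω.getD j d) ≠ 2) : M.IsHeapChain d ω (p ++ [j]) := by
  refine ⟨fun a ha => ?_, hp.2.append (List.isChain_singleton j) fun x hx y hy => ?_⟩
  · rcases List.mem_append.mp ha with ha | ha
    · exact hp.1 a ha
    · rwa [List.mem_singleton.mp ha]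
  · rw [hi, Option.mem_some_iff] at hx
    rw [List.head?_singleton, Option.mem_some_iff] at hy
    subst hx hy
    exact ⟨hij, hM⟩

theorem IsHeapChain.getLast?_eq_of_isTailCommuting {ω : List B} {p : List ℕ}
    (hp : M.IsHeapChain d ω p) {a : ℕ} (ha : a ∈ p) (hta : M.IsTailCommuting d ω a) :
    p.getLast? = some a := by
  obtain ⟨l₁, l₂, rfl⟩ := List.mem_iff_append.mp ha
  cases l₂ with
  | nil => simp
  | cons b l₂ =>
    obtain ⟨-, ⟨hab, hM⟩, -⟩ := List.isChain_append_cons_cons.mp hp.2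
    exact absurd (hta.2 _ (List.getD_mem_drop hab (hp.1 b (by simp)))) hM

theorem IsHeapChain.eraseIdx {ω : List B} {p : List ℕ} (hp : M.IsHeapChain d ω p) {j : ℕ}
    (hj : j < ω.length) (hjp : j ∉ p) :
    M.IsHeapChain d (ω.eraseIdx j) (p.map fun a => if a < j then a else a - 1) := by
  have hne : ∀ a ∈ p, a ≠ j := fun a ha h => hjp (h ▸ ha)
  refine ⟨?_, (List.isChain_map _).mpr (hp.2.imp_of_mem_imp fun a b ha hb ⟨hab, hM⟩ => ⟨?_, ?_⟩)⟩
  · simp only [List.mem_map, forall_exists_index, and_imp, forall_apply_eq_imp_iff₂,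
      List.length_eraseIdx_of_lt hj]
    intro a ha
    have := hp.1 a ha
    have := hne a ha
    split_ifs <;> omega
  · have := hne a ha
    have := hne b hb
    split_ifs <;> omega
  · rwa [ω.getD_eraseIdx_of_ne (hne a ha), ω.getD_eraseIdx_of_ne (hne b hb)]

/-- Mirsky's argument: equal letters never commute, so distinct positions carrying the same
letter lie on a common heap chain and have distinct heights. -/
theorem length_le_mul_card [Fintype B] {ω : List B} {K : ℕ}
    (hK : ∀ p, M.IsHeapChain d ω p → p.length ≤ K) : ω.length ≤ K * Fintype.card B := by
  classical
  let IsHeightOf (j k : ℕ) : Prop :=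
    ∃ p, M.IsHeapChain d ω p ∧ p.getLast? = some j ∧ p.length = k
  let height (j : ℕ) : ℕ := Nat.findGreatest (IsHeightOf j) K
  have hpos : ∀ j < ω.length, 1 ≤ height j := fun j hj =>
    Nat.le_findGreatest (hK _ (isHeapChain_singleton hj)) ⟨[j], isHeapChain_singleton hj, rfl, rfl⟩
  have hlt : ∀ i j, i < j → j < ω.length → ω.getD i d = ω.getD j d → height i < height j := by
    intro i j hij hj heq
    have hi : i < ω.length := by omega
    obtain ⟨p, hp, hlast, hlen⟩ := Nat.findGreatest_spec (P := IsHeightOf i)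
      (hK _ (isHeapChain_singleton hi)) ⟨[i], isHeapChain_singleton hi, rfl, rfl⟩
    have hext := hp.concat hlast hij hj (by rw [heq, M.diagonal]; omega)
    have := Nat.le_findGreatest (P := IsHeightOf j) (hK _ hext) ⟨p ++ [j], hext, by simp, rfl⟩
    rwa [List.length_append, List.length_singleton, hlen] at this
  have hmaps : Set.MapsTo (fun j => (height j, ω.getD j d)) (Finset.range ω.length)
      (Finset.Icc 1 K ×ˢ (Finset.univ : Finset B) : Finset (ℕ × B)) := fun j hj => by
    simp only [Finset.coe_range, Set.mem_Iio] at hj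
    exact Finset.mem_product.mpr
      ⟨Finset.mem_Icc.mpr ⟨hpos j hj, Nat.findGreatest_le K⟩, Finset.mem_univ _⟩
  have hinj : Set.InjOn (fun j => (height j, ω.getD j d)) (Finset.range ω.length) := by
    intro i hi j hj hij
    simp only [Finset.coe_range, Set.mem_Iio, Prod.mk.injEq] at hi hj hij
    by_contra hne
    rcases lt_or_gt_of_ne hne with h | h
    · exact (hlt i j h hj hij.2).ne hij.1
    · exact (hlt j i h hi hij.2.symm).ne hij.1.symm
  simpa using Finset.card_le_card_of_injOn _ hmaps hinj

end Heap

section Reflection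

variable [DecidableEq B] (M : CoxeterMatrix B)

/-- The matrix `(-cos (π / M i j))` of the canonical bilinear form, correct for right-angled `M`,
where its entries are `1`, `0`, `-1` for `M i j = 1, 2, ∞`. -/
def rightAngledForm : Matrix B B ℤ := fun i j =>
  if i = j then 1 else if M i j = 0 then -1 else 0

variable {M}

@[simp] lemma rightAngledForm_self (i : B) : M.rightAngledForm i i = 1 := by
  simp [rightAngledForm]

lemma rightAngledForm_of_eq_two {i j : B} (h : M i j = 2) : M.rightAngledForm i j = 0 := by
  have hij : i ≠ j := by rintro rfl; simp at h
  simp [rightAngledForm, hij, h]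

lemma rightAngledForm_of_eq_zero {i j : B} (hij : i ≠ j) (h : M i j = 0) :
    M.rightAngledForm i j = -1 := by
  simp [rightAngledForm, hij, h]

variable [Fintype B]

variable (M) in
/-- The reflection in the simple root `αᵢ = Pi.single i 1`. -/
def simpleReflection (i : B) : Module.End ℤ (B → ℤ) :=
  LinearMap.id -
    (2 • (LinearMap.proj i ∘ₗ M.rightAngledForm.mulVecLin)).smulRight (Pi.single i 1)

lemma simpleReflection_apply (i : B) (v : B → ℤ) :
    M.simpleReflection i v = v - (2 * (M.rightAngledForm *ᵥ v) i) • Pi.single i 1 := by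
  simp [simpleReflection]

lemma simpleReflection_single (i j : B) :
    M.simpleReflection i (Pi.single j 1) =
      Pi.single j 1 - (2 * M.rightAngledForm i j) • Pi.single i 1 := by
  rw [simpleReflection_apply, mulVec_single_one, col_apply]

lemma rightAngledForm_mulVec_simpleReflection (i j : B) (v : B → ℤ) :
    (M.rightAngledForm *ᵥ M.simpleReflection j v) i =
      (M.rightAngledForm *ᵥ v) i - 2 * (M.rightAngledForm *ᵥ v) j * M.rightAngledForm i j := by
  rw [simpleReflection_apply, mulVec_sub, mulVec_smul, mulVec_single_one]
  simp

lemma simpleReflection_single_self (i : B) :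
    M.simpleReflection i (Pi.single i 1) = -Pi.single i 1 := by
  rw [simpleReflection_single, rightAngledForm_self]
  module

lemma simpleReflection_single_of_eq_two {i j : B} (h : M i j = 2) :
    M.simpleReflection i (Pi.single j 1) = Pi.single j 1 := by
  rw [simpleReflection_single, rightAngledForm_of_eq_two h]
  module

lemma simpleReflection_single_of_eq_zero {i j : B} (hij : i ≠ j) (h : M i j = 0) :
    M.simpleReflection i (Pi.single j 1) = Pi.single j 1 + (2 : ℤ) • Pi.single i 1 := by
  rw [simpleReflection_single, rightAngledForm_of_eq_zero hij h]
  module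

lemma simpleReflection_mul_self (i : B) :
    M.simpleReflection i * M.simpleReflection i = 1 := by
  refine LinearMap.ext fun v => ?_
  rw [Module.End.mul_apply, simpleReflection_apply _ (M.simpleReflection i v),
    rightAngledForm_mulVec_simpleReflection, rightAngledForm_self, simpleReflection_apply]
  simp only [Module.End.one_apply]
  module

lemma simpleReflection_commute {i j : B} (h : M i j = 2) :
    Commute (M.simpleReflection i) (M.simpleReflection j) := by
  refine LinearMap.ext fun v => ?_
  have h' : M j i = 2 := by rw [M.symmetric]; exact h
  rw [Module.End.mul_apply, Module.End.mul_apply,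
    simpleReflection_apply _ (M.simpleReflection j v), rightAngledForm_mulVec_simpleReflection,
    simpleReflection_apply _ (M.simpleReflection i v), rightAngledForm_mulVec_simpleReflection,
    rightAngledForm_of_eq_two h, rightAngledForm_of_eq_two h', simpleReflection_apply _ v,
    simpleReflection_apply _ v]
  module

lemma isLiftable_simpleReflection (hra : M.IsRightAngled) :
    M.IsLiftable M.simpleReflection := by
  intro i j
  rcases eq_or_ne i j with rfl | hij
  · simp [simpleReflection_mul_self]
  · rcases hra i j hij with h | h
    · rw [h, pow_two, mul_assoc, ← mul_assoc (M.simpleReflection j),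
        ← (simpleReflection_commute h).eq, mul_assoc, simpleReflection_mul_self, mul_one,
        simpleReflection_mul_self]
    · rw [h, pow_zero]

end Reflection

end CoxeterMatrix

namespace CoxeterSystem

variable {B W : Type*} [Group W] {M : CoxeterMatrix B} (cs : CoxeterSystem M W)

local prefix:100 "s " => cs.simple
local prefix:100 "π " => cs.wordProd
local prefix:100 "ℓ " => cs.length

theorem simple_commute_of_eq_two {i j : B} (h : M i j = 2) : Commute (s i) (s j) := by
  have h' : s i * s j * (s i * s j) = 1 := by simpa [h, pow_two] using cs.simple_mul_simple_pow i j
  calc s i * s j = (s i * s j)⁻¹ := eq_inv_of_mul_eq_one_left h'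
    _ = s j * s i := by rw [mul_inv_rev, cs.inv_simple, cs.inv_simple]

theorem not_isRightDescent_mul_simple_of_eq_two {w : W} {i j : B} (h : M i j = 2)
    (hj : cs.IsRightDescent w j) (hi : ¬cs.IsRightDescent w i) :
    ¬cs.IsRightDescent (w * s j) i := by
  intro hi'
  apply hi
  have hw : w * s i = w * s j * s i * s j := by
    rw [mul_assoc, mul_assoc, (cs.simple_commute_of_eq_two h).eq, cs.simple_mul_simple_cancel_left]
  unfold IsRightDescent at *
  calc ℓ (w * s i) ≤ ℓ (w * s j * s i) + ℓ (s j) := hw ▸ cs.length_mul_le _ _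
    _ < ℓ (w * s j) + 1 := by rw [cs.length_simple]; omega
    _ ≤ ℓ w := by omega

theorem simple_commute_wordProd {i : B} {ω : List B} (h : ∀ c ∈ ω, M i c = 2) :
    Commute (s i) (π ω) :=
  Commute.list_prod_right _ _ fun _ hx => by
    obtain ⟨c, hc, rfl⟩ := List.mem_map.mp hx
    exact cs.simple_commute_of_eq_two (h c hc)

theorem wordProd_mul_simple_of_isTailCommuting {d : B} {ω : List B} {j : ℕ}
    (h : M.IsTailCommuting d ω j) : π ω * s (ω.getD j d) = π (ω.eraseIdx j) := by
  obtain ⟨hj, hc⟩ := h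
  have hsplit : ω.take j ++ ω.getD j d :: ω.drop (j + 1) = ω := by
    rw [List.getD_eq_getElem _ _ hj, List.getElem_cons_drop, List.take_append_drop]
  calc π ω * s (ω.getD j d)
      = π (ω.take j) * (s (ω.getD j d) * π (ω.drop (j + 1))) * s (ω.getD j d) := by
        rw [← cs.wordProd_cons, ← cs.wordProd_append, hsplit]
    _ = π (ω.eraseIdx j) := by
        rw [(cs.simple_commute_wordProd hc).eq, List.eraseIdx_eq_take_drop_succ,
          cs.wordProd_append, ← mul_assoc, cs.simple_mul_simple_cancel_right]

variable {cs} in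
theorem IsReduced.isRightDescent_of_isTailCommuting {d : B} {ω : List B} {j : ℕ}
    (hω : cs.IsReduced ω) (h : M.IsTailCommuting d ω j) :
    cs.IsRightDescent (π ω) (ω.getD j d) ∧ cs.IsReduced (ω.eraseIdx j) := by
  have hle := cs.length_wordProd_le (ω.eraseIdx j)
  rw [List.length_eraseIdx_of_lt h.1, ← cs.wordProd_mul_simple_of_isTailCommuting h] at hle
  have := cs.length_mul_simple (π ω) (ω.getD j d)
  unfold IsRightDescent IsReduced at *
  rw [← cs.wordProd_mul_simple_of_isTailCommuting h, List.length_eraseIdx_of_lt h.1]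
  omega

variable {cs} in
theorem IsReduced.isRightDescent_wordProd_concat {ω : List B} {i : B}
    (hω : cs.IsReduced (ω ++ [i])) : cs.IsRightDescent (π (ω ++ [i])) i := by
  have h : π (ω ++ [i]) * s i = π ω := by
    rw [← List.concat_eq_append, cs.wordProd_concat, cs.simple_mul_simple_cancel_right]
  have hlen : ℓ (π (ω ++ [i])) = ω.length + 1 := by rw [hω]; simp
  rw [IsRightDescent, h, hlen]
  exact Nat.lt_succ_of_le (cs.length_wordProd_le ω)

theorem le_firmness {ω : List B} (hω : cs.IsReduced ω) {k : ℕ} (hk : k ≤ ω.length)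
    (hfirm : k = 0 ∨ cs.IsFirm (π (ω.take k))) : k ≤ cs.firmness (π ω) := by
  refine le_csSup ⟨ω.length, ?_⟩ ⟨ω, hω, rfl, hk, hfirm⟩
  rintro k' ⟨ω', hω', hπ, hk', -⟩
  rw [← hω, ← hπ, hω']
  exact hk'

theorem length_le_firmness_of_isFirm {w : W} (h : cs.IsFirm w) : ℓ w ≤ cs.firmness w := by
  obtain ⟨ω, hω, rfl⟩ := cs.exists_isReduced w
  rw [hω]
  exact cs.le_firmness hω le_rfl (Or.inr (by rwa [List.take_length]))

theorem firmness_mul_simple_le {w : W} {i : B} (hi : cs.IsRightDescent w i) :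
    cs.firmness (w * s i) ≤ cs.firmness w := by
  obtain ⟨ω₀, hω₀, hw₀⟩ := cs.exists_isReduced (w * s i)
  refine csSup_le ⟨0, ω₀, hω₀, hw₀.symm, Nat.zero_le _, Or.inl rfl⟩ ?_
  rintro k ⟨ω, hω, hπ, hk, hfirm⟩
  have hπ' : π (ω ++ [i]) = w := by
    rw [← List.concat_eq_append, cs.wordProd_concat, hπ, cs.simple_mul_simple_cancel_right]
  have hred : cs.IsReduced (ω ++ [i]) := by
    have := cs.isRightDescent_iff.mp hi
    rw [IsReduced, hπ', List.length_append, List.length_singleton, ← hω, hπ]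
    omega
  rw [← hπ']
  exact cs.le_firmness hred (by simp; omega) (by rwa [List.take_append_of_le_length hk])

theorem finite_setOf_length_le [Finite B] (n : ℕ) : {w : W | ℓ w ≤ n}.Finite :=
  ((List.finite_length_le B n).image cs.wordProd).subset fun w hw => by
    obtain ⟨ω, hω, rfl⟩ := cs.exists_isReduced w
    exact ⟨ω, by rwa [Set.mem_ofPred_eq, ← hω], rfl⟩

section RightAngled

variable [Fintype B] [DecidableEq B] (hra : M.IsRightAngled)

def rootRep : W →* Module.End ℤ (B → ℤ) :=
  cs.lift ⟨M.simpleReflection, M.isLiftable_simpleReflection hra⟩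

theorem rootRep_simple (i : B) : cs.rootRep hra (s i) = M.simpleReflection i :=
  cs.lift_apply_simple _ i

theorem rootRep_mul_simple_apply (w : W) (i : B) (v : B → ℤ) :
    cs.rootRep hra (w * s i) v = cs.rootRep hra w (M.simpleReflection i v) := by
  rw [map_mul, Module.End.mul_apply, rootRep_simple]

theorem rootRep_apply_eq_mul_simple (w : W) (i : B) (v : B → ℤ) :
    cs.rootRep hra w v = cs.rootRep hra (w * s i) (M.simpleReflection i v) := by
  rw [← rootRep_mul_simple_apply, cs.simple_mul_simple_cancel_right]

theorem rootRep_single_ne_zero (w : W) (i : B) : cs.rootRep hra w (Pi.single i 1) ≠ 0 := by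
  intro h
  have h' := congrArg (cs.rootRep hra w⁻¹) h
  rw [← Module.End.mul_apply, ← map_mul, inv_mul_cancel, map_one, Module.End.one_apply,
    map_zero] at h'
  simpa using congrFun h' i

/-- The infinite dihedral step of positivity: peeling a descent `j` off `w` turns `a αᵢ + b αⱼ`
into `(2a - b) αⱼ + a αᵢ`, so the root that is not a descent keeps the larger coefficient. -/
theorem nonneg_rootRep_smul_add_smul {n : ℕ}
    (hpos : ∀ w, ℓ w ≤ n → ∀ i, ¬cs.IsRightDescent w i → 0 ≤ cs.rootRep hra w (Pi.single i 1))
    (w : W) (hw : ℓ w ≤ n) {i j : B} (h : M i j = 0) (hi : ¬cs.IsRightDescent w i) {a b : ℤ}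
    (hb : 0 ≤ b) (hba : b ≤ a) :
    0 ≤ cs.rootRep hra w (a • Pi.single i 1 + b • Pi.single j 1) := by
  by_cases hj : cs.IsRightDescent w j
  · have hij : i ≠ j := by rintro rfl; simp at h
    have h' : M j i = 0 := by rw [M.symmetric]; exact h
    have hlt : ℓ (w * s j) < ℓ w := hj
    have e : a • (Pi.single i 1 + (2 : ℤ) • Pi.single j 1) + b • -(Pi.single j 1 : B → ℤ) =
        (2 * a - b) • Pi.single j 1 + a • Pi.single i 1 := by module
    rw [rootRep_apply_eq_mul_simple cs hra w j, map_add, map_smul, map_smul,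
      M.simpleReflection_single_of_eq_zero hij.symm h', M.simpleReflection_single_self, e]
    exact nonneg_rootRep_smul_add_smul hpos (w * s j) (by omega) h'
      (cs.isRightDescent_iff_not_isRightDescent_mul.mp hj) (by omega) (by omega)
  · rw [map_add, map_smul, map_smul]
    exact add_nonneg (smul_nonneg (by omega) (hpos w hw i hi)) (smul_nonneg hb (hpos w hw j hj))
termination_by cs.length w

theorem nonneg_rootRep_single {w : W} {i : B} (hi : ¬cs.IsRightDescent w i) :
    0 ≤ cs.rootRep hra w (Pi.single i 1) := by
  rcases eq_or_ne w 1 with rfl | hw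
  · simp [Pi.single_nonneg]
  obtain ⟨j, hj⟩ := cs.exists_rightDescent_of_ne_one hw
  have hij : i ≠ j := by rintro rfl; exact hi hj
  have hlt : ℓ (w * s j) < ℓ w := hj
  rw [rootRep_apply_eq_mul_simple cs hra w j]
  rcases hra j i hij.symm with h | h
  · rw [M.simpleReflection_single_of_eq_two h]
    exact nonneg_rootRep_single
      (cs.not_isRightDescent_mul_simple_of_eq_two (by rwa [M.symmetric]) hj hi)
  · rw [M.simpleReflection_single_of_eq_zero hij.symm h, add_comm, ← one_smul ℤ (Pi.single i 1)]
    exact cs.nonneg_rootRep_smul_add_smul hra (n := ℓ (w * s j))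
      (fun v hv k hk => nonneg_rootRep_single hk) (w * s j) le_rfl h
      (cs.isRightDescent_iff_not_isRightDescent_mul.mp hj) zero_le_one (by norm_num)
termination_by cs.length w

theorem isRightDescent_iff_not_nonneg {w : W} {i : B} :
    cs.IsRightDescent w i ↔ ¬0 ≤ cs.rootRep hra w (Pi.single i 1) := by
  refine ⟨fun hi hw => ?_, not_imp_comm.mp (cs.nonneg_rootRep_single hra)⟩
  have h := cs.nonneg_rootRep_single hra (cs.isRightDescent_iff_not_isRightDescent_mul.mp hi)
  rw [rootRep_apply_eq_mul_simple cs hra w i, M.simpleReflection_single_self, map_neg,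
    neg_nonneg] at hw
  exact cs.rootRep_single_ne_zero hra _ i (le_antisymm hw h)

include hra in
theorem eq_two_of_isRightDescent {w : W} {i j : B} (hij : i ≠ j) (hi : cs.IsRightDescent w i)
    (hj : cs.IsRightDescent w j) : M i j = 2 := by
  refine (hra i j hij).resolve_right fun h => (cs.isRightDescent_iff_not_nonneg hra).mp hj ?_
  rw [rootRep_apply_eq_mul_simple cs hra w i, M.simpleReflection_single_of_eq_zero hij h,
    add_comm, ← one_smul ℤ (Pi.single j 1)]
  exact cs.nonneg_rootRep_smul_add_smul hra (fun v _ k hk => cs.nonneg_rootRep_single hra hk)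
    (w * s i) le_rfl h (cs.isRightDescent_iff_not_isRightDescent_mul.mp hi) zero_le_one
    (by norm_num)

include hra in
theorem isRightDescent_mul_simple_iff {w : W} {i j : B} (h : M i j = 2) :
    cs.IsRightDescent (w * s j) i ↔ cs.IsRightDescent w i := by
  rw [isRightDescent_iff_not_nonneg cs hra, isRightDescent_iff_not_nonneg cs hra,
    rootRep_mul_simple_apply, M.simpleReflection_single_of_eq_two (by rwa [M.symmetric])]

variable {cs} in
include hra in
/-- Peel letters off the end: a right descent other than the last letter commutes with it, and so
remains a descent once that letter is deleted. -/
theorem IsReduced.exists_isTailCommuting_of_isRightDescent (d : B) {ω : List B}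
    (hω : cs.IsReduced ω) {i : B} (hi : cs.IsRightDescent (π ω) i) :
    ∃ j, M.IsTailCommuting d ω j ∧ ω.getD j d = i := by
  induction ω using List.reverseRecOn generalizing i with
  | nil => exact absurd hi (by simpa using cs.not_isRightDescent_one i)
  | append_singleton χ t ih =>
    by_cases hit : i = t
    · subst hit
      refine ⟨χ.length, ⟨by simp, fun c hc => ?_⟩, by simp⟩
      simp [List.drop_eq_nil_of_le] at hc
    have hM : M i t = 2 := cs.eq_two_of_isRightDescent hra hit hi hω.isRightDescent_wordProd_concat
    have hχ : cs.IsReduced χ := by simpa using hω.take χ.length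
    rw [← List.concat_eq_append, cs.wordProd_concat, cs.isRightDescent_mul_simple_iff hra hM]
      at hi
    obtain ⟨j, ⟨hj, hc⟩, rfl⟩ := ih hχ hi
    refine ⟨j, ⟨by simp; omega, fun c hc' => ?_⟩, List.getD_append _ _ _ _ hj⟩
    rw [List.getD_append _ _ _ _ hj]
    rw [List.drop_append_of_le_length hj, List.mem_append, List.mem_singleton] at hc'
    rcases hc' with hc' | rfl
    · exact hc c hc'
    · exact hM

variable {cs} in
include hra in
theorem IsReduced.isFirm_of_isTailCommuting_unique {d : B} {ω : List B} (hω : cs.IsReduced ω)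
    {j : ℕ} (hj : M.IsTailCommuting d ω j) (huniq : ∀ j', M.IsTailCommuting d ω j' → j' = j) :
    cs.IsFirm (π ω) := by
  refine ⟨ω.getD j d, (hω.isRightDescent_of_isTailCommuting hj).1, fun i hi => ?_⟩
  obtain ⟨j', hj', rfl⟩ := hω.exists_isTailCommuting_of_isRightDescent hra d hi
  rw [huniq j' hj']

variable {cs} in
include hra in
/-- Deleting tail-commuting positions off the chain does not increase firmness; once none is left,
the last position is the only tail-commuting one and `π ω` is firm. -/
theorem IsReduced.length_le_firmness_of_isHeapChain {d : B} {ω : List B} (hω : cs.IsReduced ω)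
    {p : List ℕ} (hp : M.IsHeapChain d ω p) : p.length ≤ cs.firmness (π ω) := by
  by_cases hex : ∃ j, M.IsTailCommuting d ω j ∧ j ∉ p
  · obtain ⟨j, hj, hjp⟩ := hex
    obtain ⟨hdesc, hred⟩ := hω.isRightDescent_of_isTailCommuting hj
    have : (ω.eraseIdx j).length < ω.length := by
      have := hj.1
      rw [List.length_eraseIdx_of_lt hj.1]
      omega
    calc p.length = (p.map fun a => if a < j then a else a - 1).length := (List.length_map _).symm
      _ ≤ cs.firmness (π (ω.eraseIdx j)) :=
        hred.length_le_firmness_of_isHeapChain (hp.eraseIdx hj.1 hjp)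
      _ ≤ cs.firmness (π ω) := by
        rw [← cs.wordProd_mul_simple_of_isTailCommuting hj]
        exact cs.firmness_mul_simple_le hdesc
  push Not at hex
  rcases Nat.eq_zero_or_pos ω.length with h0 | hpos
  · have := hp.length_le
    omega
  have hlast : M.IsTailCommuting d ω (ω.length - 1) :=
    ⟨by omega, fun c hc => by rw [Nat.sub_add_cancel hpos, List.drop_length] at hc; simp at hc⟩
  have hfirm := hω.isFirm_of_isTailCommuting_unique hra hlast fun j' hj' =>
    Option.some.inj ((hp.getLast?_eq_of_isTailCommuting (hex j' hj') hj').symm.trans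
      (hp.getLast?_eq_of_isTailCommuting (hex _ hlast) hlast))
  calc p.length ≤ ω.length := hp.length_le
    _ = ℓ (π ω) := hω.symm
    _ ≤ cs.firmness (π ω) := cs.length_le_firmness_of_isFirm hfirm
termination_by ω.length

include hra in
theorem length_le_firmness_mul_card (w : W) :
    ℓ w ≤ cs.firmness w * Fintype.card B := by
  obtain ⟨ω, hω, rfl⟩ := cs.exists_isReduced w
  cases ω with
  | nil => simp
  | cons d ω' =>
    rw [hω]
    exact M.length_le_mul_card (d := d) fun p hp => hω.length_le_firmness_of_isHeapChain hra hp

end RightAngled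

end CoxeterSystem

/-- The set of elements of firmness at most `n` is finite; more precisely, it is contained
in a ball of radius `d(n)` depending only on `n` and the Coxeter system. -/
theorem finite_setOf_firmness_le {B W : Type*} [Group W] [Fintype B]
    {M : CoxeterMatrix B} (cs : CoxeterSystem M W) (hra : M.IsRightAngled) (n : ℕ) :
    {w : W | cs.firmness w ≤ n}.Finite ∧
      ∃ d : ℕ, {w : W | cs.firmness w ≤ n} ⊆ {w : W | cs.length w ≤ d} := by
  classical
  have hball : {w : W | cs.firmness w ≤ n} ⊆ {w : W | cs.length w ≤ n * Fintype.card B} :=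
    fun w hw => (cs.length_le_firmness_mul_card hra w).trans (Nat.mul_le_mul_right _ hw)
  exact ⟨(cs.finite_setOf_length_le _).subset hball, _, hball⟩
end

section
/- (Closing squares, first form, in the Coxeter group.) Let (W,S) be a right-angled Coxeter system. Let n ≥ 1 and let w₁, w₂, w₃ ∈ W with ℓ(w₁) = ℓ(w₂) = n and ℓ(w₃) = n + 1, and suppose w₃ = w₁ t = w₂ s for distinct generators s, t ∈ S. Then st = ts in W, the element w₄ := w₁ s equals w₂ t, and ℓ(w₄) = n − 1. -/
/-!
Letting each simple reflection `s` act on `W × ZMod 2` by `(x, ε) ↦ (s x s, ε + [x = s])` defines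
an action of `W` (Tits' cocycle): the relators `(s s')ᵐ` act trivially because their left inversion
sequences are periodic, so every reflection occurs in them an even number of times. The second
coordinate then shows that the parity of the number of occurrences of a reflection `t` in the
left inversion sequence of a word depends only on its product. This gives the strong exchange
condition, and shows that a word without repeated left inversions is reduced.

If `s ≠ t` are both right descents of `w₃`, repeated exchange splits off from `w₃`, as reduced
right factors, the alternating words `…st` of every length for which these are reduced. In a
right-angled group `m(s,t) = ∞` would give `st` infinite order (map onto the infinite dihedral
group), hence all alternating words in `s, t` reduced, which is absurd. So `m(s,t) = 2`, and
splitting off `st` gives `ℓ(w₃ t s) = n - 1`.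
-/

namespace CoxeterSystem

open List

variable {B W : Type*} [Group W] {M : CoxeterMatrix B} (cs : CoxeterSystem M W)

theorem prod_map_alternatingWord_two_mul {G : Type*} [Monoid G] (f : B → G) (i j : B) (p : ℕ) :
    ((alternatingWord i j (2 * p)).map f).prod = (f i * f j) ^ p := by
  induction p with
  | zero => simp [alternatingWord]
  | succ p ih =>
    rw [Nat.mul_succ, alternatingWord_succ, alternatingWord_succ]
    simp [ih, pow_succ]

theorem wordProd_alternatingWord_two_mul_eq_one (i j : B) :
    cs.wordProd (alternatingWord i j (2 * M i j)) = 1 := by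
  rw [wordProd, prod_map_alternatingWord_two_mul, simple_mul_simple_pow]

theorem simple_mul_mul_simple_eq_simple_iff (i : B) (x : W) :
    cs.simple i * x * cs.simple i = cs.simple i ↔ x = cs.simple i := by
  constructor
  · intro h
    simpa [mul_assoc] using congrArg (cs.simple i * · * cs.simple i) h
  · rintro rfl
    simp

section Classical

open scoped Classical

theorem count_leftInvSeq_alternatingWord_two_mul (i j : B) (t : W) :
    ((cs.leftInvSeq (alternatingWord i j (2 * M i j))).count t : ZMod 2) = 0 := by
  set L := cs.leftInvSeq (alternatingWord i j (2 * M i j))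
  have hL : L.length = M i j + M i j := by simp [L]; ring
  have hperiodic : L.drop (M i j) = L.take (M i j) := by
    apply List.ext_getElem (by simp [hL])
    intro k hk _
    simp only [length_drop, hL] at hk
    simp only [getElem_drop, getElem_take]
    rw [getElem_leftInvSeq_alternatingWord cs i j _ _ (by omega),
      getElem_leftInvSeq_alternatingWord cs i j _ _ (by omega),
      prod_alternatingWord_eq_mul_pow, prod_alternatingWord_eq_mul_pow]
    simp [show (2 * (M i j + k) + 1) / 2 = M i j + k by omega,
      show (2 * k + 1) / 2 = k by omega, pow_add]
  rw [← take_append_drop (M i j) L, hperiodic, count_append, Nat.cast_add,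
    CharTwo.add_self_eq_zero]

noncomputable def simpleReflectionPerm (i : B) : Equiv.Perm (W × ZMod 2) :=
  Function.Involutive.toPerm
    (fun x => (cs.simple i * x.1 * cs.simple i, x.2 + if x.1 = cs.simple i then 1 else 0))
    (by
      rintro ⟨x, ε⟩
      simp only [simple_mul_mul_simple_eq_simple_iff, add_assoc, CharTwo.add_self_eq_zero,
        add_zero, simple_mul_simple_cancel_right, ← mul_assoc, simple_mul_simple_self, one_mul])

theorem simpleReflectionPerm_apply (i : B) (x : W) (ε : ZMod 2) :
    cs.simpleReflectionPerm i (x, ε) =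
      (cs.simple i * x * cs.simple i, ε + if x = cs.simple i then 1 else 0) :=
  rfl

theorem prod_map_simpleReflectionPerm (ω : List B) (x : W) (ε : ZMod 2) :
    (ω.map cs.simpleReflectionPerm).prod (x, ε) =
      (cs.wordProd ω * x * (cs.wordProd ω)⁻¹,
        ε + (cs.leftInvSeq ω).count (cs.wordProd ω * x * (cs.wordProd ω)⁻¹)) := by
  induction ω with
  | nil => simp
  | cons i ω ih =>
    set y := cs.wordProd ω * x * (cs.wordProd ω)⁻¹
    have hy : cs.wordProd (i :: ω) * x * (cs.wordProd (i :: ω))⁻¹ =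
        cs.simple i * y * cs.simple i := by
      simp [y, wordProd_cons, mul_assoc]
    have hconj : MulAut.conj (cs.simple i) y = cs.simple i * y * cs.simple i := by simp
    rw [map_cons, prod_cons, Equiv.Perm.mul_apply, ih, simpleReflectionPerm_apply, hy, leftInvSeq,
      count_cons, ← hconj, count_map_of_injective _ _ (MulAut.conj _).injective, hconj]
    simp only [beq_iff_eq, eq_comm (a := cs.simple i), simple_mul_mul_simple_eq_simple_iff]
    push_cast
    rw [add_assoc]

theorem isLiftable_simpleReflectionPerm : M.IsLiftable cs.simpleReflectionPerm := by
  intro i j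
  rw [← prod_map_alternatingWord_two_mul]
  ext ⟨x, ε⟩ : 1
  rw [prod_map_simpleReflectionPerm, wordProd_alternatingWord_two_mul_eq_one,
    count_leftInvSeq_alternatingWord_two_mul]
  simp

noncomputable def reflectionRep : W →* Equiv.Perm (W × ZMod 2) :=
  cs.lift ⟨cs.simpleReflectionPerm, cs.isLiftable_simpleReflectionPerm⟩

theorem reflectionRep_wordProd (ω : List B) :
    cs.reflectionRep (cs.wordProd ω) = (ω.map cs.simpleReflectionPerm).prod := by
  rw [wordProd, map_list_prod, map_map]
  congr 2
  funext i
  exact cs.lift_apply_simple cs.isLiftable_simpleReflectionPerm i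

noncomputable def leftInvParity (w t : W) : ZMod 2 :=
  (cs.reflectionRep w (w⁻¹ * t * w, 0)).2

theorem leftInvParity_wordProd (ω : List B) (t : W) :
    cs.leftInvParity (cs.wordProd ω) t = (cs.leftInvSeq ω).count t := by
  simp [leftInvParity, reflectionRep_wordProd, prod_map_simpleReflectionPerm, mul_assoc]

theorem reflectionRep_apply (w x : W) (ε : ZMod 2) :
    cs.reflectionRep w (x, ε) = (w * x * w⁻¹, ε + cs.leftInvParity w (w * x * w⁻¹)) := by
  obtain ⟨ω, rfl⟩ := cs.wordProd_surjective w
  rw [leftInvParity_wordProd, reflectionRep_wordProd, prod_map_simpleReflectionPerm]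

theorem leftInvParity_mul (u v t : W) :
    cs.leftInvParity (u * v) t = cs.leftInvParity u t + cs.leftInvParity v (u⁻¹ * t * u) := by
  have h := congrArg Prod.snd (show cs.reflectionRep (u * v) ((u * v)⁻¹ * t * (u * v), 0) =
      cs.reflectionRep u (cs.reflectionRep v ((u * v)⁻¹ * t * (u * v), 0)) by
    rw [map_mul, Equiv.Perm.mul_apply])
  simp only [reflectionRep_apply, zero_add] at h
  rw [show v * ((u * v)⁻¹ * t * (u * v)) * v⁻¹ = u⁻¹ * t * u by group,
    show u * (u⁻¹ * t * u) * u⁻¹ = t by group,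
    show u * v * ((u * v)⁻¹ * t * (u * v)) * (u * v)⁻¹ = t by group] at h
  rw [h, add_comm]

theorem leftInvParity_one (t : W) : cs.leftInvParity 1 t = 0 := by
  simpa using cs.leftInvParity_wordProd [] t

theorem leftInvParity_simple_self (i : B) : cs.leftInvParity (cs.simple i) (cs.simple i) = 1 := by
  simpa using cs.leftInvParity_wordProd [i] (cs.simple i)

theorem IsReflection.leftInvParity_self {t : W} (ht : cs.IsReflection t) :
    cs.leftInvParity t t = 1 := by
  obtain ⟨u, i, rfl⟩ := ht
  have hinv := cs.leftInvParity_mul u u⁻¹ (u * cs.simple i * u⁻¹)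
  rw [mul_inv_cancel, leftInvParity_one] at hinv
  rw [show u⁻¹ * (u * cs.simple i * u⁻¹) * u = cs.simple i by group] at hinv
  rw [leftInvParity_mul, mul_assoc, leftInvParity_mul,
    show u⁻¹ * (u * (cs.simple i * u⁻¹)) * u = cs.simple i by group,
    show (u * cs.simple i)⁻¹ * (u * (cs.simple i * u⁻¹)) * (u * cs.simple i) = cs.simple i by
      simp [mul_assoc],
    leftInvParity_simple_self, ← mul_assoc]
  linear_combination -hinv

theorem mem_leftInvSeq_of_leftInvParity_eq_one {ω : List B} {t : W}
    (h : cs.leftInvParity (cs.wordProd ω) t = 1) : t ∈ cs.leftInvSeq ω := by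
  rw [← count_pos_iff, Nat.pos_iff_ne_zero]
  intro h0
  rw [leftInvParity_wordProd, h0] at h
  exact zero_ne_one h

theorem mem_leftInvSeq_of_isLeftInversion {ω : List B} {t : W}
    (ht : cs.IsLeftInversion (cs.wordProd ω) t) : t ∈ cs.leftInvSeq ω := by
  obtain ⟨ω', hω', hπ⟩ := cs.exists_isReduced (t * cs.wordProd ω)
  have hnot : cs.leftInvParity (t * cs.wordProd ω) t ≠ 1 := by
    intro h
    rw [hπ] at h
    have := (cs.isLeftInversion_of_mem_leftInvSeq hω'
      (cs.mem_leftInvSeq_of_leftInvParity_eq_one h)).2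
    rw [← hπ, ← mul_assoc, ht.1.mul_self, one_mul] at this
    exact lt_asymm this ht.2
  apply cs.mem_leftInvSeq_of_leftInvParity_eq_one
  -- Splitting `w = t * (t * w)`, the parity at `t` is `1 + 0`.
  have hsplit := cs.leftInvParity_mul t (t * cs.wordProd ω) t
  rw [← mul_assoc, ht.1.mul_self, one_mul, ht.1.leftInvParity_self,
    show t⁻¹ * t * t = t by group] at hsplit
  have hzero : ∀ a : ZMod 2, a ≠ 1 → a = 0 := by decide
  rw [hsplit, hzero _ hnot, add_zero]

theorem exists_eraseIdx_of_isLeftInversion {ω : List B} {t : W}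
    (ht : cs.IsLeftInversion (cs.wordProd ω) t) :
    ∃ p < ω.length, t * cs.wordProd ω = cs.wordProd (ω.eraseIdx p) := by
  obtain ⟨p, hp, rfl⟩ := List.mem_iff_getElem.mp (cs.mem_leftInvSeq_of_isLeftInversion ht)
  refine ⟨p, by simpa using hp, ?_⟩
  rw [← getD_eq_getElem _ 1 hp, getD_leftInvSeq_mul_wordProd]

theorem isReduced_of_nodup_leftInvSeq {ω : List B} (h : (cs.leftInvSeq ω).Nodup) :
    cs.IsReduced ω := by
  obtain ⟨ω', hω', hπ⟩ := cs.exists_isReduced (cs.wordProd ω)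
  have hsub : cs.leftInvSeq ω ⊆ cs.leftInvSeq ω' := by
    intro t ht
    apply cs.mem_leftInvSeq_of_leftInvParity_eq_one
    rw [← hπ, leftInvParity_wordProd, count_eq_one_of_mem h ht, Nat.cast_one]
  have hle := h.length_le_of_subset hsub
  rw [length_leftInvSeq, length_leftInvSeq] at hle
  have := cs.length_wordProd_le ω
  rw [IsReduced] at hω' ⊢
  rw [hπ] at this ⊢
  omega

end Classical

theorem nodup_leftInvSeq_alternatingWord_two_mul {i j : B}
    (h : orderOf (cs.simple j * cs.simple i) = 0) (p : ℕ) :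
    (cs.leftInvSeq (alternatingWord i j (2 * p))).Nodup := by
  rw [nodup_iff_injective_getElem]
  rintro ⟨a, ha⟩ ⟨b, hb⟩ hab
  simp only [length_leftInvSeq, length_alternatingWord] at ha hb
  simp only [getElem_leftInvSeq_alternatingWord cs i j p _ ha,
    getElem_leftInvSeq_alternatingWord cs i j p _ hb, prod_alternatingWord_eq_mul_pow,
    show (2 * a + 1) / 2 = a by omega, show (2 * b + 1) / 2 = b by omega,
    Nat.not_even_two_mul_add_one, if_false, mul_right_inj] at hab
  exact Fin.ext ((pow_inj_iff_of_orderOf_eq_zero h).1 hab)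

theorem orderOf_simple_mul_simple_comm (i j : B) :
    orderOf (cs.simple i * cs.simple j) = orderOf (cs.simple j * cs.simple i) := by
  rw [← orderOf_inv, mul_inv_rev, inv_simple, inv_simple]

theorem isReduced_alternatingWord_of_orderOf_eq_zero {i j : B}
    (h : orderOf (cs.simple i * cs.simple j) = 0) (k : ℕ) :
    cs.IsReduced (alternatingWord i j k) := by
  have h' : orderOf (cs.simple j * cs.simple i) = 0 := by
    rwa [orderOf_simple_mul_simple_comm] at h
  rcases Nat.even_or_odd k with hk | hk
  · have := (cs.isReduced_of_nodup_leftInvSeq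
      (cs.nodup_leftInvSeq_alternatingWord_two_mul h' (k + 1))).take k
    rwa [listTake_alternatingWord _ _ _ _ (by omega), if_pos hk] at this
  · have := (cs.isReduced_of_nodup_leftInvSeq
      (cs.nodup_leftInvSeq_alternatingWord_two_mul h (k + 1))).take k
    rwa [listTake_alternatingWord _ _ _ _ (by omega), if_neg (Nat.not_even_iff_odd.2 hk)] at this

theorem length_wordProd_alternatingWord_mul {w : W} {i j : B}
    (hi : cs.IsLeftDescent w i) (hj : cs.IsLeftDescent w j) (k : ℕ)
    (hred : cs.IsReduced (alternatingWord i j k) ∧ cs.IsReduced (alternatingWord j i k)) :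
    cs.length (cs.wordProd (alternatingWord i j k) * w) + k = cs.length w := by
  induction k generalizing i j with
  | zero => simp [alternatingWord]
  | succ k ih =>
    have hprefix (a b : B) (h : cs.IsReduced (alternatingWord a b (k + 1))) :
        cs.IsReduced (alternatingWord b a k) := by
      simpa [alternatingWord_succ] using h.take k
    have hk := ih hj hi ⟨hprefix i j hred.1, hprefix j i hred.2⟩
    set a := cs.wordProd (alternatingWord j i k)
    have hsucc : cs.wordProd (alternatingWord i j (k + 1)) = a * cs.simple j := by
      rw [alternatingWord_succ, wordProd_concat]
    have hlen_succ : cs.length (a * cs.simple j) = k + 1 := by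
      rw [← hsucc, hred.1, length_alternatingWord]
    obtain ⟨ω, hω, hu⟩ := cs.exists_isReduced (a * w)
    have hw : w = cs.wordProd ((alternatingWord j i k).reverse ++ ω) := by
      rw [wordProd_append, wordProd_reverse, ← hu, inv_mul_cancel_left]
    have hωlen : ω.length + k = cs.length w := by rw [← hω, ← hu, hk]
    have hdesc : cs.IsLeftInversion (cs.wordProd ((alternatingWord j i k).reverse ++ ω))
        (cs.simple j) := by
      rw [← hw, isLeftInversion_simple_iff_isLeftDescent]; exact hj
    obtain ⟨p, hp, hexch⟩ := cs.exists_eraseIdx_of_isLeftInversion hdesc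
    rw [← hw] at hexch
    simp only [length_append, length_reverse, length_alternatingWord] at hp
    rcases lt_or_ge p k with hpk | hpk
    · -- The exchanged letter cannot lie in the alternating part, as `a * s j` is reduced.
      exfalso
      rw [eraseIdx_append_of_lt_length (by simpa using hpk), wordProd_append] at hexch
      have hshort :
          (a * cs.simple j)⁻¹ = cs.wordProd ((alternatingWord j i k).reverse.eraseIdx p) := by
        rw [← hu, ← mul_assoc] at hexch
        rw [mul_inv_rev, inv_simple, mul_right_cancel hexch, mul_inv_cancel_right]
      have := cs.length_wordProd_le ((alternatingWord j i k).reverse.eraseIdx p)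
      rw [← hshort, length_inv, hlen_succ, length_eraseIdx_of_lt (by simpa using hpk)] at this
      simp at this
      omega
    · rw [eraseIdx_append_of_length_le (by simpa using hpk), wordProd_append, wordProd_reverse,
        length_reverse, length_alternatingWord] at hexch
      have hdrop : a * cs.simple j * w = cs.wordProd (ω.eraseIdx (p - k)) := by
        rw [mul_assoc, hexch, mul_inv_cancel_left]
      have hupper := cs.length_wordProd_le (ω.eraseIdx (p - k))
      have hlower := cs.length_mul_le (a * cs.simple j)⁻¹ (a * cs.simple j * w)
      rw [inv_mul_cancel_left, length_inv, hlen_succ] at hlower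
      rw [← hdrop, length_eraseIdx_of_lt (by omega)] at hupper
      rw [hsucc]
      omega

theorem orderOf_simple_mul_simple_ne_zero_of_isLeftDescent {w : W} {i j : B}
    (hi : cs.IsLeftDescent w i) (hj : cs.IsLeftDescent w j) :
    orderOf (cs.simple i * cs.simple j) ≠ 0 := by
  intro h
  have h' : orderOf (cs.simple j * cs.simple i) = 0 := by
    rwa [orderOf_simple_mul_simple_comm] at h
  have := cs.length_wordProd_alternatingWord_mul hi hj (cs.length w + 1)
    ⟨cs.isReduced_alternatingWord_of_orderOf_eq_zero h _,
      cs.isReduced_alternatingWord_of_orderOf_eq_zero h' _⟩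
  omega

theorem isReduced_alternatingWord_two {i j : B} (h : cs.simple i ≠ cs.simple j) :
    cs.IsReduced (alternatingWord i j 2) := by
  have hne : cs.simple i * cs.simple j ≠ 1 := fun h' =>
    h (by simpa using eq_inv_of_mul_eq_one_left h')
  show cs.length (cs.wordProd [i, j]) = 2
  rw [wordProd_cons, wordProd_singleton]
  rcases cs.length_simple_mul (cs.simple j) i with h1 | h1
  · rw [h1, length_simple]
  · rw [length_simple] at h1
    exact absurd (cs.length_eq_zero_iff.1 (by omega)) hne

theorem commute_simple_of_eq_two {i j : B} (h : M i j = 2) :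
    Commute (cs.simple i) (cs.simple j) := by
  have hsq := cs.simple_mul_simple_pow i j
  rw [h, sq] at hsq
  show cs.simple i * cs.simple j = cs.simple j * cs.simple i
  simpa [mul_inv_rev] using eq_inv_of_mul_eq_one_left hsq

end CoxeterSystem

namespace CoxeterMatrix.IsRightAngled

variable {B : Type*} {M : CoxeterMatrix B}

theorem isLiftable {G : Type*} [Monoid G] (hM : M.IsRightAngled) {f : B → G}
    (hsq : ∀ i, f i * f i = 1) (hcomm : ∀ i j, M i j = 2 → Commute (f i) (f j)) :
    M.IsLiftable f := by
  intro i j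
  by_cases hij : i = j
  · rw [hij, M.diagonal, pow_one, hsq]
  · rcases hM i j hij with h | h
    · rw [h, (hcomm i j h).mul_pow, sq, sq, hsq, hsq, one_mul]
    · rw [h, pow_zero]

end CoxeterMatrix.IsRightAngled

namespace CoxeterSystem

variable {B W : Type*} [Group W] {M : CoxeterMatrix B} (cs : CoxeterSystem M W)

theorem simple_injective_of_isRightAngled (hM : M.IsRightAngled) :
    Function.Injective cs.simple := by
  classical
  let f : B → Multiplicative (B → ZMod 2) := fun i => Multiplicative.ofAdd (Pi.single i 1)
  have hsq (i : B) : f i * f i = 1 := by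
    rw [← ofAdd_add, ← Pi.single_add, CharTwo.add_self_eq_zero, Pi.single_zero, ofAdd_zero]
  have hf : M.IsLiftable f := hM.isLiftable hsq fun i j _ => Commute.all _ _
  intro i j h
  have hij := congrFun (congrArg Multiplicative.toAdd (congrArg (cs.lift ⟨f, hf⟩) h)) i
  rw [lift_apply_simple, lift_apply_simple] at hij
  by_contra hne
  simp [f, Ne.symm hne] at hij

theorem orderOf_simple_mul_simple_eq_zero (hM : M.IsRightAngled) {i j : B} (h : M i j = 0) :
    orderOf (cs.simple i * cs.simple j) = 0 := by
  classical
  have hij : i ≠ j := by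
    rintro rfl
    simp at h
  -- `DihedralGroup 0` is the infinite dihedral group, in which `sr 0 * sr 1 = r 1`.
  let f : B → DihedralGroup 0 := fun k =>
    if k = i then DihedralGroup.sr 0 else if k = j then DihedralGroup.sr 1 else 1
  have hsq (k : B) : f k * f k = 1 := by
    unfold f
    split_ifs <;> simp
  have hcomm (k l : B) (hkl : M k l = 2) : Commute (f k) (f l) := by
    unfold f
    split_ifs <;> simp_all [M.symmetric j i]
  have hf : M.IsLiftable f := hM.isLiftable hsq hcomm
  have hdvd := orderOf_map_dvd (cs.lift ⟨f, hf⟩) (cs.simple i * cs.simple j)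
  have hfi : f i = DihedralGroup.sr 0 := if_pos rfl
  have hfj : f j = DihedralGroup.sr 1 := by simp [f, hij.symm]
  rw [map_mul, lift_apply_simple, lift_apply_simple, hfi, hfj, DihedralGroup.sr_mul_sr, sub_zero,
    DihedralGroup.orderOf_r_one] at hdvd
  exact Nat.eq_zero_of_zero_dvd hdvd

theorem eq_two_of_isLeftDescent (hM : M.IsRightAngled) {w : W} {i j : B} (hij : i ≠ j)
    (hi : cs.IsLeftDescent w i) (hj : cs.IsLeftDescent w j) : M i j = 2 :=
  (hM i j hij).resolve_right fun h =>
    cs.orderOf_simple_mul_simple_ne_zero_of_isLeftDescent hi hj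
      (cs.orderOf_simple_mul_simple_eq_zero hM h)

end CoxeterSystem

theorem closing_squares_one_general {B W : Type*} [Group W] {M : CoxeterMatrix B}
    (cs : CoxeterSystem M W) (hra : M.IsRightAngled)
    (n : ℕ) (w₁ w₂ w₃ : W) (s t : B) (hst : s ≠ t)
    (h1 : cs.length w₁ = n) (h2 : cs.length w₂ = n) (h3 : cs.length w₃ = n + 1)
    (e1 : w₃ = w₁ * cs.simple t) (e2 : w₃ = w₂ * cs.simple s) :
    cs.simple s * cs.simple t = cs.simple t * cs.simple s ∧
      w₁ * cs.simple s = w₂ * cs.simple t ∧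
      cs.length (w₁ * cs.simple s) = n - 1 := by
  have hw₁ : w₃ * cs.simple t = w₁ := by rw [e1, cs.simple_mul_simple_cancel_right]
  have hw₂ : w₃ * cs.simple s = w₂ := by rw [e2, cs.simple_mul_simple_cancel_right]
  have hs : cs.IsLeftDescent w₃⁻¹ s := by
    rw [cs.isLeftDescent_inv_iff, CoxeterSystem.IsRightDescent, hw₂, h2, h3]
    omega
  have ht : cs.IsLeftDescent w₃⁻¹ t := by
    rw [cs.isLeftDescent_inv_iff, CoxeterSystem.IsRightDescent, hw₁, h1, h3]
    omega
  have hcomm := cs.commute_simple_of_eq_two (cs.eq_two_of_isLeftDescent hra hst hs ht)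
  have hne := (cs.simple_injective_of_isRightAngled hra).ne hst
  have hlen := cs.length_wordProd_alternatingWord_mul hs ht 2
    ⟨cs.isReduced_alternatingWord_two hne, cs.isReduced_alternatingWord_two hne.symm⟩
  have hw₄ :
      (cs.wordProd (CoxeterSystem.alternatingWord s t 2) * w₃⁻¹)⁻¹ = w₁ * cs.simple s := by
    simp [CoxeterSystem.alternatingWord, CoxeterSystem.wordProd, ← hw₁, mul_assoc]
  refine ⟨hcomm.eq, ?_, ?_⟩
  · rw [← hw₁, ← hw₂, mul_assoc, mul_assoc, hcomm.eq]
  · rw [← hw₄, CoxeterSystem.length_inv]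
    rw [CoxeterSystem.length_inv, h3] at hlen
    omega

/-- Closing squares (first form): if `ℓ(w₁) = ℓ(w₂) = n`, `ℓ(w₃) = n + 1` and
`w₃ = w₁ t = w₂ s` with `s ≠ t`, then `s` and `t` commute, `w₁ s = w₂ t`, and
`ℓ(w₁ s) = n - 1`. -/
theorem closing_squares_one {B W : Type*} [Group W] {M : CoxeterMatrix B}
    (cs : CoxeterSystem M W) (hra : M.IsRightAngled)
    (n : ℕ) (hn : 1 ≤ n) (w₁ w₂ w₃ : W) (s t : B) (hst : s ≠ t)
    (h1 : cs.length w₁ = n) (h2 : cs.length w₂ = n) (h3 : cs.length w₃ = n + 1)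
    (e1 : w₃ = w₁ * cs.simple t) (e2 : w₃ = w₂ * cs.simple s) :
    cs.simple s * cs.simple t = cs.simple t * cs.simple s ∧
      w₁ * cs.simple s = w₂ * cs.simple t ∧
      cs.length (w₁ * cs.simple s) = n - 1 :=
  closing_squares_one_general cs hra n w₁ w₂ w₃ s t hst h1 h2 h3 e1 e2
end
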